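/- Let (Ψ, A) be a smooth L-gauge-periodic pair on ℝ² with gauge functions g_s, and let Ω be a fundamental cell of the lattice L with basis {ω₁, ω₂}. If Ψ is nonvanishing on the boundary ∂Ω, then the magnetic flux through Ω is quantized: ∫_Ω curl A = 2πn for some integer n. -/

import Mathlib

open Complex MeasureTheory Set

noncomputable def grad (g : ℂ → ℝ) (x : ℂ) : ℂ :=
  (fderiv ℝ g x 1 : ℝ) + (fderiv ℝ g x Complex.I : ℝ) * Complex.I

/-- `curl A = ∂₁A₂ - ∂₂A₁` for `A : ℝ² → ℝ²` encoded as `A : ℂ → ℂ`. -/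
noncomputable def curl (A : ℂ → ℂ) (x : ℂ) : ℝ :=
  fderiv ℝ (fun y => (A y).im) x 1 - fderiv ℝ (fun y => (A y).re) x Complex.I

noncomputable def dotw (w : ℂ) : ℂ →L[ℝ] ℝ := w.re • Complex.reCLM + w.im • Complex.imCLM

lemma dotw_apply (w v : ℂ) : dotw w v = w.re * v.re + w.im * v.im := by
  simp [dotw, mul_comm]

lemma aux_det_ne (ω₁ ω₂ : ℂ) (h : LinearIndependent ℝ ![ω₁, ω₂]) :
    ω₁.re * ω₂.im - ω₁.im * ω₂.re ≠ 0 := by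
  rw [linearIndependent_fin2] at h
  obtain ⟨h2, h1⟩ := h
  simp only [Matrix.cons_val_one, Matrix.head_cons, Matrix.cons_val_zero] at h2 h1
  intro hD
  have hor : ω₂.re ≠ 0 ∨ ω₂.im ≠ 0 := by
    by_contra hc
    push_neg at hc
    exact h2 (Complex.ext hc.1 hc.2)
  rcases hor with hre | him
  · exact h1 (ω₁.re / ω₂.re) (by
      rw [Complex.ext_iff]
      refine ⟨by simp [Complex.smul_re]; field_simp, ?_⟩
      simp only [Complex.smul_im, smul_eq_mul]
      rw [div_mul_eq_mul_div, div_eq_iff hre]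
      linear_combination hD)
  · exact h1 (ω₁.im / ω₂.im) (by
      rw [Complex.ext_iff]
      refine ⟨?_, by simp [Complex.smul_im]; field_simp⟩
      simp only [Complex.smul_re, smul_eq_mul]
      rw [div_mul_eq_mul_div, div_eq_iff him]
      linear_combination -hD)

lemma aux_zero_coeff {ω₁ ω₂ : ℂ} (hD : ω₁.re * ω₂.im - ω₁.im * ω₂.re ≠ 0) {a b : ℝ}
    (h : a • ω₁ + b • ω₂ = 0) : a = 0 ∧ b = 0 := by
  have h1 : a * ω₁.re + b * ω₂.re = 0 := by
    have := congrArg Complex.re h; simpa [Complex.smul_re] using this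
  have h2 : a * ω₁.im + b * ω₂.im = 0 := by
    have := congrArg Complex.im h; simpa [Complex.smul_im] using this
  constructor
  · have : a * (ω₁.re * ω₂.im - ω₁.im * ω₂.re) = 0 := by linear_combination ω₂.im * h1 - ω₂.re * h2
    exact (mul_eq_zero.1 this).resolve_right hD
  · have : b * (ω₁.re * ω₂.im - ω₁.im * ω₂.re) = 0 := by linear_combination -ω₁.im * h1 + ω₁.re * h2
    exact (mul_eq_zero.1 this).resolve_right hD

noncomputable def Tmap (ω₁ ω₂ : ℂ) : ℂ →L[ℝ] ℂ :=
  Complex.reCLM.smulRight ω₁ + Complex.imCLM.smulRight ω₂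

lemma Tmap_apply (ω₁ ω₂ z : ℂ) : Tmap ω₁ ω₂ z = z.re • ω₁ + z.im • ω₂ := by
  simp [Tmap]

noncomputable def Vmap (ω₁ ω₂ : ℂ) : ℝ × ℝ →L[ℝ] ℂ :=
  (ContinuousLinearMap.fst ℝ ℝ ℝ).smulRight ω₁ + (ContinuousLinearMap.snd ℝ ℝ ℝ).smulRight ω₂

lemma Vmap_apply (ω₁ ω₂ : ℂ) (p : ℝ × ℝ) : Vmap ω₁ ω₂ p = p.1 • ω₁ + p.2 • ω₂ := by
  simp [Vmap]

lemma Tmap_det (ω₁ ω₂ : ℂ) : (Tmap ω₁ ω₂).det = ω₁.re * ω₂.im - ω₁.im * ω₂.re := by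
  have : (Tmap ω₁ ω₂).det = LinearMap.det ((Tmap ω₁ ω₂) : ℂ →ₗ[ℝ] ℂ) := rfl
  rw [this, ← LinearMap.det_toMatrix Complex.basisOneI, Matrix.det_fin_two]
  simp [LinearMap.toMatrix_apply, Tmap_apply, Complex.basisOneI]
  ring

lemma curl_eq {A : ℂ → ℂ} (hA : Differentiable ℝ A) (x : ℂ) :
    curl A x = (fderiv ℝ A x 1).im - (fderiv ℝ A x Complex.I).re := by
  have him : fderiv ℝ (fun y => (A y).im) x = Complex.imCLM.comp (fderiv ℝ A x) :=
    (Complex.imCLM.hasFDerivAt.comp x (hA x).hasFDerivAt).fderiv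
  have hre : fderiv ℝ (fun y => (A y).re) x = Complex.reCLM.comp (fderiv ℝ A x) :=
    (Complex.reCLM.hasFDerivAt.comp x (hA x).hasFDerivAt).fderiv
  rw [curl, him, hre]; rfl

lemma clm_decomp (B : ℂ →L[ℝ] ℂ) (ω : ℂ) : B ω = ω.re • B 1 + ω.im • B Complex.I := by
  conv_lhs => rw [show ω = ω.re • (1:ℂ) + ω.im • Complex.I by
    simp only [Complex.real_smul, mul_one]; exact (Complex.re_add_im ω).symm]
  rw [map_add, B.map_smul, B.map_smul]

lemma div_key {A : ℂ → ℂ} (hA : Differentiable ℝ A) (ω₁ ω₂ : ℂ) (x : ℂ) :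
    dotw ω₂ (fderiv ℝ A x ω₁) - dotw ω₁ (fderiv ℝ A x ω₂)
      = (ω₁.re * ω₂.im - ω₁.im * ω₂.re) * curl A x := by
  rw [curl_eq hA, clm_decomp (fderiv ℝ A x) ω₁, clm_decomp (fderiv ℝ A x) ω₂]
  simp only [dotw_apply, Complex.add_re, Complex.add_im, Complex.smul_re, Complex.smul_im,
    smul_eq_mul]
  ring

lemma grad_dot (g : ℂ → ℝ) (x w : ℂ) : dotw w (grad g x) = fderiv ℝ g x w := by
  have : fderiv ℝ g x w = w.re • fderiv ℝ g x 1 + w.im • fderiv ℝ g x Complex.I := by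
    conv_lhs => rw [show w = w.re • (1:ℂ) + w.im • Complex.I by
      simp only [Complex.real_smul, mul_one]; exact (Complex.re_add_im w).symm]
    rw [map_add, (fderiv ℝ g x).map_smul, (fderiv ℝ g x).map_smul]
  rw [this]
  simp [dotw_apply, grad, mul_comm]

/-- flux quantization.  If `(Ψ, A)` is a smooth `L`-gauge-periodic
pair and `Ψ` does not vanish on the boundary of the fundamental cell `Ω`
of the lattice `L` with basis `{ω₁, ω₂}`, then `∫_Ω curl A = 2πn` for some `n ∈ ℤ`. -/
theorem flux_quantization
    (ω₁ ω₂ : ℂ) (hindep : LinearIndependent ℝ ![ω₁, ω₂])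
    (L : Set ℂ) (hL : L = {v | ∃ m k : ℤ, v = (m : ℂ) * ω₁ + (k : ℂ) * ω₂})
    (Ω : Set ℂ)
    (hΩ : Ω = {x | ∃ r₁ r₂ : ℝ, r₁ ∈ Set.Icc (-(1:ℝ)/2) (1/2) ∧
      r₂ ∈ Set.Icc (-(1:ℝ)/2) (1/2) ∧ x = r₁ • ω₁ + r₂ • ω₂})
    (Ψ A : ℂ → ℂ) (hΨ : ContDiff ℝ (⊤ : ℕ∞) Ψ) (hA : ContDiff ℝ (⊤ : ℕ∞) A)
    (hper : ∀ s ∈ L, ∃ g : ℂ → ℝ, ContDiff ℝ (⊤ : ℕ∞) g ∧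
      (∀ x, Ψ (x + s) = Complex.exp (Complex.I * (g x : ℂ)) * Ψ x) ∧
      (∀ x, A (x + s) = A x + grad g x))
    (hnonvanish : ∀ x ∈ frontier Ω, Ψ x ≠ 0) :
    ∃ n : ℤ, ∫ x in Ω, curl A x = 2 * Real.pi * n := by
  have hD : ω₁.re * ω₂.im - ω₁.im * ω₂.re ≠ 0 := aux_det_ne ω₁ ω₂ hindep
  have azc : ∀ {a b : ℝ}, a • ω₁ + b • ω₂ = 0 → a = 0 ∧ b = 0 := fun h => aux_zero_coeff hD h
  obtain ⟨g₁, hg₁, hΨ₁, hA₁⟩ := hper ω₁ (by rw [hL]; exact ⟨1, 0, by push_cast; ring⟩)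
  obtain ⟨g₂, hg₂, hΨ₂, hA₂⟩ := hper ω₂ (by rw [hL]; exact ⟨0, 1, by push_cast; ring⟩)
  set x₀ : ℂ := (-(1:ℝ)/2) • ω₁ + (-(1:ℝ)/2) • ω₂ with hx₀def
  -- x₀ is on the frontier of Ω
  have hx₀Ω : x₀ ∈ Ω := by
    rw [hΩ]; exact ⟨-(1:ℝ)/2, -(1:ℝ)/2, by norm_num, by norm_num, rfl⟩
  have hx₀f : x₀ ∈ frontier Ω := by
    rw [frontier]
    refine ⟨subset_closure hx₀Ω, ?_⟩
    intro hint
    have hφ : Continuous (fun t : ℝ => x₀ - t • ω₁) :=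
      continuous_const.sub (continuous_id.smul continuous_const)
    have hnb : (fun t : ℝ => x₀ - t • ω₁) ⁻¹' interior Ω ∈ nhds (0 : ℝ) :=
      hφ.continuousAt.preimage_mem_nhds (isOpen_interior.mem_nhds (by simpa using hint))
    obtain ⟨ε, hε, hball⟩ := Metric.mem_nhds_iff.1 hnb
    have htmem : x₀ - (ε/2) • ω₁ ∈ Ω := by
      refine interior_subset (hball ?_)
      rw [Metric.mem_ball, Real.dist_eq, sub_zero, abs_of_pos (half_pos hε)]
      linarith
    rw [hΩ] at htmem
    obtain ⟨r₁, r₂, hr₁, hr₂, heq⟩ := htmem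
    have hzero : (r₁ - (-(1:ℝ)/2 - ε/2)) • ω₁ + (r₂ - (-(1:ℝ)/2)) • ω₂ = 0 := by
      have h' := heq
      rw [hx₀def] at h'
      simp only [Complex.real_smul] at h' ⊢
      push_cast at h' ⊢
      linear_combination -h'
    obtain ⟨ha, hb⟩ := azc hzero
    have : r₁ = -(1:ℝ)/2 - ε/2 := by
      linarith [sub_eq_zero.1 (by linarith [ha] : r₁ - (-(1:ℝ)/2 - ε/2) = 0)]
    linarith [hr₁.1]
  have hΨx₀ : Ψ x₀ ≠ 0 := hnonvanish x₀ hx₀f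
  -- the cocycle condition at the corner
  obtain ⟨k, hk⟩ : ∃ k : ℤ,
      g₁ (x₀ + ω₂) + g₂ x₀ - (g₂ (x₀ + ω₁) + g₁ x₀) = 2 * Real.pi * k := by
    have c1 : Ψ (x₀ + ω₂ + ω₁)
        = Complex.exp (Complex.I * (g₁ (x₀ + ω₂) : ℂ))
          * (Complex.exp (Complex.I * (g₂ x₀ : ℂ)) * Ψ x₀) := by
      rw [hΨ₁ (x₀ + ω₂), hΨ₂ x₀]
    have c2 : Ψ (x₀ + ω₂ + ω₁)
        = Complex.exp (Complex.I * (g₂ (x₀ + ω₁) : ℂ))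
          * (Complex.exp (Complex.I * (g₁ x₀ : ℂ)) * Ψ x₀) := by
      rw [show x₀ + ω₂ + ω₁ = x₀ + ω₁ + ω₂ by ring, hΨ₂ (x₀ + ω₁), hΨ₁ x₀]
    have key : Complex.exp (Complex.I * (g₁ (x₀ + ω₂) : ℂ) + Complex.I * (g₂ x₀ : ℂ))
        = Complex.exp (Complex.I * (g₂ (x₀ + ω₁) : ℂ) + Complex.I * (g₁ x₀ : ℂ)) := by
      rw [Complex.exp_add, Complex.exp_add]
      have hcc := c1.symm.trans c2
      rw [← mul_assoc, ← mul_assoc] at hcc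
      exact mul_right_cancel₀ hΨx₀ hcc
    obtain ⟨n, hn⟩ := Complex.exp_eq_exp_iff_exists_int.1 key
    refine ⟨n, ?_⟩
    have hC : ((g₁ (x₀ + ω₂) + g₂ x₀ - (g₂ (x₀ + ω₁) + g₁ x₀) : ℝ) : ℂ)
        = ((2 * Real.pi * (n : ℝ) : ℝ) : ℂ) := by
      push_cast
      apply mul_left_cancel₀ Complex.I_ne_zero
      linear_combination hn
    exact_mod_cast hC
  -- Green's theorem part
  have hgreen : ∫ p in Icc ((-(1:ℝ)/2, -(1:ℝ)/2) : ℝ × ℝ) ((1:ℝ)/2, (1:ℝ)/2),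
      (ω₁.re * ω₂.im - ω₁.im * ω₂.re) * curl A (Vmap ω₁ ω₂ p)
      = -((g₂ (x₀ + ω₁)) - g₂ x₀) + ((g₁ (x₀ + ω₂)) - g₁ x₀) := by
    have hAd : Differentiable ℝ A := hA.differentiable (by simp)
    set V : ℝ × ℝ →L[ℝ] ℂ := Vmap ω₁ ω₂ with hV
    set P : ℝ × ℝ → ℝ := fun p => dotw ω₁ (A (V p)) with hP
    set Q : ℝ × ℝ → ℝ := fun p => dotw ω₂ (A (V p)) with hQ
    set Pd : ℝ × ℝ → (ℝ × ℝ →L[ℝ] ℝ) :=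
      fun p => ((dotw ω₁).comp (fderiv ℝ A (V p))).comp V with hPdd
    set Qd : ℝ × ℝ → (ℝ × ℝ →L[ℝ] ℝ) :=
      fun p => ((dotw ω₂).comp (fderiv ℝ A (V p))).comp V with hQdd
    have hPd : ∀ p, HasFDerivAt P (Pd p) p := fun p =>
      (dotw ω₁).hasFDerivAt.comp p ((hAd (V p)).hasFDerivAt.comp p V.hasFDerivAt)
    have hQd : ∀ p, HasFDerivAt Q (Qd p) p := fun p =>
      (dotw ω₂).hasFDerivAt.comp p ((hAd (V p)).hasFDerivAt.comp p V.hasFDerivAt)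
    have h10 : V (1, 0) = ω₁ := by rw [hV, Vmap_apply]; simp
    have h01 : V (0, 1) = ω₂ := by rw [hV, Vmap_apply]; simp
    have hpoint : ∀ p : ℝ × ℝ, Qd p (1, 0) + (-(Pd p)) (0, 1)
        = (ω₁.re * ω₂.im - ω₁.im * ω₂.re) * curl A (V p) := by
      intro p
      rw [← div_key hAd ω₁ ω₂ (V p)]
      simp only [hQdd, hPdd, ContinuousLinearMap.comp_apply,
        ContinuousLinearMap.neg_apply, h10, h01]
      ring
    have hfcont : Continuous (fderiv ℝ A) := hA.continuous_fderiv (by simp)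
    have hcurlcont : Continuous (curl A) := by
      have hcc : curl A = fun x => (fderiv ℝ A x 1).im - (fderiv ℝ A x Complex.I).re :=
        funext (curl_eq hAd)
      rw [hcc]
      exact (Complex.continuous_im.comp (hfcont.clm_apply continuous_const)).sub
        (Complex.continuous_re.comp (hfcont.clm_apply continuous_const))
    have hPc : Continuous P := (dotw ω₁).continuous.comp (hA.continuous.comp V.continuous)
    have hQc : Continuous Q := (dotw ω₂).continuous.comp (hA.continuous.comp V.continuous)
    have hab : ((-(1:ℝ)/2, -(1:ℝ)/2) : ℝ × ℝ) ≤ ((1:ℝ)/2, (1:ℝ)/2) := by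
      constructor <;> norm_num
    have hInt : IntegrableOn (fun x : ℝ × ℝ => Qd x (1, 0) + (-(Pd x)) (0, 1))
        (Icc ((-(1:ℝ)/2, -(1:ℝ)/2) : ℝ × ℝ) ((1:ℝ)/2, (1:ℝ)/2)) volume := by
      have hfe : (fun x : ℝ × ℝ => Qd x (1, 0) + (-(Pd x)) (0, 1))
          = fun x => (ω₁.re * ω₂.im - ω₁.im * ω₂.re) * curl A (V x) := funext hpoint
      rw [hfe]
      exact (continuous_const.mul (hcurlcont.comp V.continuous)).integrableOn_Icc
    have green := integral_divergence_prod_Icc_of_hasFDerivAt_off_countable_of_le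
      Q (fun p => -P p) Qd (fun p => -(Pd p)) ((-(1:ℝ)/2, -(1:ℝ)/2) : ℝ × ℝ) ((1:ℝ)/2, (1:ℝ)/2)
      hab ∅ countable_empty hQc.continuousOn (hPc.neg.continuousOn)
      (fun x _ => hQd x) (fun x _ => (hPd x).neg) hInt
    simp only [hpoint] at green
    rw [green]
    -- boundary terms
    have hQint : ∀ c : ℝ, IntervalIntegrable (fun y => Q (c, y)) volume (-(1:ℝ)/2) (1/2) :=
      fun c => (hQc.comp (continuous_const.prodMk continuous_id)).intervalIntegrable _ _
    have hPint : ∀ c : ℝ, IntervalIntegrable (fun x => P (x, c)) volume (-(1:ℝ)/2) (1/2) :=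
      fun c => (hPc.comp (continuous_id.prodMk continuous_const)).intervalIntegrable _ _
    have innerQ : ∀ y : ℝ, HasDerivAt (fun t : ℝ => V (-(1:ℝ)/2, t)) ω₂ y := by
      intro y
      have hfn : (fun t : ℝ => V (-(1:ℝ)/2, t)) = fun t : ℝ => ((-(1:ℝ)/2) • ω₁) + t • ω₂ := by
        funext t; rw [hV, Vmap_apply]
      rw [hfn]
      simpa using ((hasDerivAt_id y).smul_const ω₂).const_add ((-(1:ℝ)/2) • ω₁)
    have innerP : ∀ x : ℝ, HasDerivAt (fun t : ℝ => V (t, -(1:ℝ)/2)) ω₁ x := by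
      intro x
      have hfn : (fun t : ℝ => V (t, -(1:ℝ)/2)) = fun t : ℝ => t • ω₁ + ((-(1:ℝ)/2) • ω₂) := by
        funext t; rw [hV, Vmap_apply]
      rw [hfn]
      simpa using ((hasDerivAt_id x).smul_const ω₁).add_const ((-(1:ℝ)/2) • ω₂)
    have hg₁d : ∀ y : ℝ, HasDerivAt (fun t : ℝ => g₁ (V (-(1:ℝ)/2, t)))
        (fderiv ℝ g₁ (V (-(1:ℝ)/2, y)) ω₂) y := fun y =>
      ((hg₁.differentiable (by simp) (V (-(1:ℝ)/2, y))).hasFDerivAt).comp_hasDerivAt y (innerQ y)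
    have hg₂d : ∀ x : ℝ, HasDerivAt (fun t : ℝ => g₂ (V (t, -(1:ℝ)/2)))
        (fderiv ℝ g₂ (V (x, -(1:ℝ)/2)) ω₁) x := fun x =>
      ((hg₂.differentiable (by simp) (V (x, -(1:ℝ)/2))).hasFDerivAt).comp_hasDerivAt x (innerP x)
    have hcontd₁ : Continuous fun y : ℝ => fderiv ℝ g₁ (V (-(1:ℝ)/2, y)) ω₂ :=
      ((hg₁.continuous_fderiv (by simp)).comp
        (V.continuous.comp (continuous_const.prodMk continuous_id))).clm_apply continuous_const
    have hcontd₂ : Continuous fun x : ℝ => fderiv ℝ g₂ (V (x, -(1:ℝ)/2)) ω₁ :=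
      ((hg₂.continuous_fderiv (by simp)).comp
        (V.continuous.comp (continuous_id.prodMk continuous_const))).clm_apply continuous_const
    have hdiffQ : ∀ y : ℝ, Q ((1:ℝ)/2, y) - Q (-(1:ℝ)/2, y)
        = fderiv ℝ g₁ (V (-(1:ℝ)/2, y)) ω₂ := by
      intro y
      have hshift : V ((1:ℝ)/2, y) = V (-(1:ℝ)/2, y) + ω₁ := by
        rw [hV, Vmap_apply, Vmap_apply]; simp only [Complex.real_smul]; push_cast; ring
      rw [hQ]
      simp only [hshift, hA₁, map_add, grad_dot]
      ring
    have hdiffP : ∀ x : ℝ, P (x, (1:ℝ)/2) - P (x, -(1:ℝ)/2)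
        = fderiv ℝ g₂ (V (x, -(1:ℝ)/2)) ω₁ := by
      intro x
      have hshift : V (x, (1:ℝ)/2) = V (x, -(1:ℝ)/2) + ω₂ := by
        rw [hV, Vmap_apply, Vmap_apply]; simp only [Complex.real_smul]; push_cast; ring
      rw [hP]
      simp only [hshift, hA₂, map_add, grad_dot]
      ring
    have hend₁ : V (-(1:ℝ)/2, (1:ℝ)/2) = x₀ + ω₂ := by
      rw [hV, Vmap_apply, hx₀def]; simp only [Complex.real_smul]; push_cast; ring
    have hend₂ : V ((1:ℝ)/2, -(1:ℝ)/2) = x₀ + ω₁ := by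
      rw [hV, Vmap_apply, hx₀def]; simp only [Complex.real_smul]; push_cast; ring
    have hend₀ : V (-(1:ℝ)/2, -(1:ℝ)/2) = x₀ := by
      rw [hV, Vmap_apply, hx₀def]
    have edgeQ : (∫ y in (-(1:ℝ)/2)..((1:ℝ)/2), Q ((1:ℝ)/2, y))
        - ∫ y in (-(1:ℝ)/2)..((1:ℝ)/2), Q (-(1:ℝ)/2, y) = g₁ (x₀ + ω₂) - g₁ x₀ := by
      rw [← intervalIntegral.integral_sub (hQint _) (hQint _)]
      calc (∫ y in (-(1:ℝ)/2)..((1:ℝ)/2), (Q ((1:ℝ)/2, y) - Q (-(1:ℝ)/2, y)))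
          = ∫ y in (-(1:ℝ)/2)..((1:ℝ)/2), fderiv ℝ g₁ (V (-(1:ℝ)/2, y)) ω₂ := by
            simp only [hdiffQ]
        _ = g₁ (V (-(1:ℝ)/2, (1:ℝ)/2)) - g₁ (V (-(1:ℝ)/2, -(1:ℝ)/2)) :=
            intervalIntegral.integral_eq_sub_of_hasDerivAt (fun y _ => hg₁d y)
              (hcontd₁.intervalIntegrable _ _)
        _ = g₁ (x₀ + ω₂) - g₁ x₀ := by rw [hend₁, hend₀]
    have edgeP : (∫ x in (-(1:ℝ)/2)..((1:ℝ)/2), P (x, (1:ℝ)/2))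
        - ∫ x in (-(1:ℝ)/2)..((1:ℝ)/2), P (x, -(1:ℝ)/2) = g₂ (x₀ + ω₁) - g₂ x₀ := by
      rw [← intervalIntegral.integral_sub (hPint _) (hPint _)]
      calc (∫ x in (-(1:ℝ)/2)..((1:ℝ)/2), (P (x, (1:ℝ)/2) - P (x, -(1:ℝ)/2)))
          = ∫ x in (-(1:ℝ)/2)..((1:ℝ)/2), fderiv ℝ g₂ (V (x, -(1:ℝ)/2)) ω₁ := by
            simp only [hdiffP]
        _ = g₂ (V ((1:ℝ)/2, -(1:ℝ)/2)) - g₂ (V (-(1:ℝ)/2, -(1:ℝ)/2)) :=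
            intervalIntegral.integral_eq_sub_of_hasDerivAt (fun x _ => hg₂d x)
              (hcontd₂.intervalIntegrable _ _)
        _ = g₂ (x₀ + ω₁) - g₂ x₀ := by rw [hend₂, hend₀]
    rw [intervalIntegral.integral_neg, intervalIntegral.integral_neg]
    linarith [edgeQ, edgeP]
  -- change of variables
  have hcov : ∫ x in Ω, curl A x
      = ∫ p in Icc ((-(1:ℝ)/2, -(1:ℝ)/2) : ℝ × ℝ) ((1:ℝ)/2, (1:ℝ)/2),
          |ω₁.re * ω₂.im - ω₁.im * ω₂.re| * curl A (Vmap ω₁ ω₂ p) := by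
    set e := Complex.measurableEquivRealProd with he
    set sq : Set ℂ := ⇑e ⁻¹' (Icc ((-(1:ℝ)/2, -(1:ℝ)/2) : ℝ × ℝ) ((1:ℝ)/2, (1:ℝ)/2)) with hsq
    have hmem : ∀ z : ℂ, z ∈ sq ↔ z.re ∈ Icc (-(1:ℝ)/2) (1/2) ∧ z.im ∈ Icc (-(1:ℝ)/2) (1/2) := by
      intro z
      simp [hsq, Complex.measurableEquivRealProd_apply, Prod.le_def, Set.mem_Icc, and_assoc,
        and_left_comm]
      tauto
    have hΩim : Ω = (Tmap ω₁ ω₂) '' sq := by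
      rw [hΩ]
      ext x
      simp only [Set.mem_setOf_eq, Set.mem_image]
      constructor
      · rintro ⟨r₁, r₂, h1, h2, rfl⟩
        refine ⟨⟨r₁, r₂⟩, (hmem _).2 ⟨h1, h2⟩, by rw [Tmap_apply]⟩
      · rintro ⟨z, hz, rfl⟩
        obtain ⟨h1, h2⟩ := (hmem z).1 hz
        exact ⟨z.re, z.im, h1, h2, by rw [Tmap_apply]⟩
    have hmeas : MeasurableSet sq := e.measurable measurableSet_Icc
    have hinj : Set.InjOn (Tmap ω₁ ω₂) sq := by
      intro z₁ _ z₂ _ h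
      rw [Tmap_apply, Tmap_apply] at h
      have hz : (z₁.re - z₂.re) • ω₁ + (z₁.im - z₂.im) • ω₂ = 0 := by
        rw [sub_smul, sub_smul]
        rw [show z₁.re • ω₁ = z₁.re • ω₁ + z₁.im • ω₂ - z₁.im • ω₂ by abel, h]
        abel
      obtain ⟨h1, h2⟩ := azc hz
      exact Complex.ext (by linarith [sub_eq_zero.1 (h1 ▸ rfl : z₁.re - z₂.re = 0)])
        (by linarith [sub_eq_zero.1 (h2 ▸ rfl : z₁.im - z₂.im = 0)])
    have cov := integral_image_eq_integral_abs_det_fderiv_smul volume hmeas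
        (fun x _ => (Tmap ω₁ ω₂).hasFDerivAt.hasFDerivWithinAt) hinj (curl A)
    rw [hΩim, cov]
    simp only [Tmap_det]
    have hpre := Complex.volume_preserving_equiv_real_prod.setIntegral_preimage_emb
        Complex.measurableEquivRealProd.measurableEmbedding
        (fun p : ℝ × ℝ => |ω₁.re * ω₂.im - ω₁.im * ω₂.re| * curl A (Vmap ω₁ ω₂ p))
        (Icc ((-(1:ℝ)/2, -(1:ℝ)/2) : ℝ × ℝ) ((1:ℝ)/2, (1:ℝ)/2))
    rw [← hpre]
    apply setIntegral_congr_fun hmeas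
    intro z _
    have hVT : Vmap ω₁ ω₂ (Complex.measurableEquivRealProd z) = Tmap ω₁ ω₂ z := by
      rw [Complex.measurableEquivRealProd_apply, Vmap_apply, Tmap_apply]
    simp only [hVT, smul_eq_mul]
  have habs : ∀ c : ℝ,
      (c = ω₁.re * ω₂.im - ω₁.im * ω₂.re ∨ c = -(ω₁.re * ω₂.im - ω₁.im * ω₂.re)) →
      ∃ n : ℤ, (∫ p in Icc ((-(1:ℝ)/2, -(1:ℝ)/2) : ℝ × ℝ) ((1:ℝ)/2, (1:ℝ)/2),
        c * curl A (Vmap ω₁ ω₂ p)) = 2 * Real.pi * n := by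
    rintro c (rfl | rfl)
    · exact ⟨k, by rw [hgreen]; linarith [hk]⟩
    · refine ⟨-k, ?_⟩
      have hfe : (fun p : ℝ × ℝ =>
            -(ω₁.re * ω₂.im - ω₁.im * ω₂.re) * curl A (Vmap ω₁ ω₂ p))
          = fun p => -((ω₁.re * ω₂.im - ω₁.im * ω₂.re) * curl A (Vmap ω₁ ω₂ p)) := by
        funext p; ring
      rw [hfe, integral_neg, hgreen]
      push_cast
      linarith [hk]
  rcases abs_choice (ω₁.re * ω₂.im - ω₁.im * ω₂.re) with h | h
  · rw [hcov, h]; exact habs _ (Or.inl rfl)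
  · rw [hcov, h]; exact habs _ (Or.inr rfl)
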